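/- arXiv:1810.06440 — 4 statements merged into one kernel-verified Lean document; each statement's English description precedes it below -/
import Mathlib

section
/- Let p > 1/2, s ≥ 0, a ≥ 0 and 0 < θ < 1. For sequences f, g : ℤ → ℂ with ‖f‖_{p,s,a} < ∞ and ‖g‖_{p,s,a} < ∞, the convolution f⋆g defined by (f⋆g)_j := ∑_{i∈ℤ} f_i g_{j−i} is well defined (all series converge absolutely) and satisfies ‖f⋆g‖_{p,s,a} ≤ C_alg(p) · ‖f‖_{p,s,a} · ‖g‖_{p,s,a}, where C_alg(p) := 2^p (∑_{i∈ℤ} ⟨i⟩^{−2p})^{1/2}. -/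
open scoped BigOperators

/-- `⟨j⟩ := max(|j|,1)` as a real number. -/
noncomputable def jap (j : ℤ) : ℝ := max (|(j : ℝ)|) 1

/-- Weight for the Gevrey/Sobolev weighted ℓ² norm:
`⟨j⟩^{2p} e^{2a|j| + 2s⟨j⟩^θ}`. -/
noncomputable def gevreyWeight (p s a θ : ℝ) (j : ℤ) : ℝ :=
  jap j ^ (2 * p) * Real.exp (2 * a * |(j : ℝ)| + 2 * s * jap j ^ θ)

/-- The algebra constant `C_alg(p) := 2^p (∑_{i∈ℤ} ⟨i⟩^{−2p})^{1/2}`. -/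
noncomputable def Calg (p : ℝ) : ℝ :=
  (2 : ℝ) ^ p * Real.sqrt (∑' i : ℤ, jap i ^ (-(2 * p)))

/-!
The weight `w = gevreyWeight p s a θ` is almost submultiplicative: since `⟨j⟩ ≤ ⟨i⟩ + ⟨j - i⟩`,
convexity of `x ↦ x^{2p}` and subadditivity of `x ↦ x^θ` and of `|·|` give
`w_j ≤ c_{j,i} w_i w_{j-i}` with `c_{j,i} = 2^{2p-1} (⟨i⟩^{-2p} + ⟨j-i⟩^{-2p})`, whose row sums are
all `C_alg(p)²`. Cauchy–Schwarz in `i` then bounds `w_j |(f⋆g)_j|²` by `C_alg(p)²` times the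
convolution of `|f|² w` and `|g|² w`, and summing over `j` (Young's inequality in `ℓ¹`) gives the
claim.
-/

lemma one_le_jap (j : ℤ) : 1 ≤ jap j := le_max_right _ _

lemma jap_pos (j : ℤ) : 0 < jap j := one_pos.trans_le (one_le_jap j)

lemma jap_eq_abs {j : ℤ} (hj : j ≠ 0) : jap j = |(j : ℝ)| :=
  max_eq_left (by exact_mod_cast Int.one_le_abs hj)

lemma abs_intCast_le_add_abs_sub (i j : ℤ) : |(j : ℝ)| ≤ |(i : ℝ)| + |((j - i : ℤ) : ℝ)| := by
  simpa [Int.cast_sub] using abs_add_le (i : ℝ) ((j : ℝ) - i)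

lemma jap_le_jap_add_jap_sub (i j : ℤ) : jap j ≤ jap i + jap (j - i) := by
  refine max_le ((abs_intCast_le_add_abs_sub i j).trans
    (add_le_add (le_max_left _ _) (le_max_left _ _))) ?_
  linarith [one_le_jap i, jap_pos (j - i)]

lemma summable_jap_rpow_neg {q : ℝ} (hq : 1 < q) : Summable fun i : ℤ => jap i ^ (-q) :=
  (Real.summable_abs_int_rpow hq).congr_cofinite <|
    (Filter.eventually_cofinite_ne 0).mono fun i hi => by simp only [jap_eq_abs hi]

lemma Real.rpow_add_le_mul_rpow_add_rpow {x y q : ℝ} (hx : 0 ≤ x) (hy : 0 ≤ y) (hq : 1 ≤ q) :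
    (x + y) ^ q ≤ 2 ^ (q - 1) * (x ^ q + y ^ q) := by
  lift x to NNReal using hx
  lift y to NNReal using hy
  exact_mod_cast NNReal.rpow_add_le_mul_rpow_add_rpow x y hq

lemma jap_rpow_le_two_rpow_mul (i j : ℤ) {q : ℝ} (hq : 1 ≤ q) :
    jap j ^ q ≤ 2 ^ (q - 1) * (jap i ^ q + jap (j - i) ^ q) :=
  (Real.rpow_le_rpow (jap_pos j).le (jap_le_jap_add_jap_sub i j) (by linarith)).trans
    (Real.rpow_add_le_mul_rpow_add_rpow (jap_pos i).le (jap_pos _).le hq)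

lemma gevreyWeight_exponent_le_add {s a θ : ℝ} (hs : 0 ≤ s) (ha : 0 ≤ a) (hθ0 : 0 ≤ θ) (hθ1 : θ ≤ 1)
    (i j : ℤ) :
    2 * a * |(j : ℝ)| + 2 * s * jap j ^ θ ≤
      (2 * a * |(i : ℝ)| + 2 * s * jap i ^ θ) +
        (2 * a * |((j - i : ℤ) : ℝ)| + 2 * s * jap (j - i) ^ θ) := by
  have hjap : jap j ^ θ ≤ jap i ^ θ + jap (j - i) ^ θ :=
    (Real.rpow_le_rpow (jap_pos j).le (jap_le_jap_add_jap_sub i j) hθ0).trans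
      (Real.rpow_add_le_add_rpow (jap_pos i).le (jap_pos _).le hθ0 hθ1)
  have := mul_le_mul_of_nonneg_left (abs_intCast_le_add_abs_sub i j) (by positivity : 0 ≤ 2 * a)
  have := mul_le_mul_of_nonneg_left hjap (by positivity : 0 ≤ 2 * s)
  linarith

lemma gevreyWeight_pos (p s a θ : ℝ) (j : ℤ) : 0 < gevreyWeight p s a θ j :=
  mul_pos (Real.rpow_pos_of_pos (jap_pos j) _) (Real.exp_pos _)

/-- The kernel `c_{j,i}` measuring how far `gevreyWeight p s a θ` is from submultiplicative. -/
noncomputable def calgKernel (p : ℝ) (j i : ℤ) : ℝ :=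
  2 ^ (2 * p - 1) * (jap i ^ (-(2 * p)) + jap (j - i) ^ (-(2 * p)))

lemma calgKernel_nonneg (p : ℝ) (j i : ℤ) : 0 ≤ calgKernel p j i :=
  mul_nonneg (Real.rpow_nonneg zero_le_two _)
    (add_nonneg (Real.rpow_nonneg (jap_pos i).le _) (Real.rpow_nonneg (jap_pos _).le _))

lemma hasSum_calgKernel {p : ℝ} (hp : 1 / 2 < p) (j : ℤ) :
    HasSum (calgKernel p j) (Calg p ^ 2) := by
  set S := ∑' i : ℤ, jap i ^ (-(2 * p))
  have hS : HasSum (fun i : ℤ => jap i ^ (-(2 * p))) S :=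
    (summable_jap_rpow_neg (by linarith)).hasSum
  have hS' : HasSum (fun i : ℤ => jap (j - i) ^ (-(2 * p))) S :=
    (Equiv.subLeft j).hasSum_iff.mpr hS
  have hCalg : Calg p ^ 2 = 2 ^ (2 * p - 1) * (S + S) := by
    have hpow : ((2 : ℝ) ^ p) ^ 2 = 2 ^ (2 * p - 1) * 2 := by
      rw [← Real.rpow_natCast, ← Real.rpow_mul zero_le_two, ← Real.rpow_add_one two_ne_zero]
      ring_nf
    rw [Calg, mul_pow, Real.sq_sqrt (tsum_nonneg fun i => Real.rpow_nonneg (jap_pos i).le _), hpow]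
    ring
  rw [hCalg]
  exact (hS.add hS').mul_left _

lemma gevreyWeight_le_calgKernel_mul {p s a θ : ℝ} (hp : 1 / 2 ≤ p) (hs : 0 ≤ s) (ha : 0 ≤ a)
    (hθ0 : 0 ≤ θ) (hθ1 : θ ≤ 1) (j i : ℤ) :
    gevreyWeight p s a θ j ≤
      calgKernel p j i * (gevreyWeight p s a θ i * gevreyWeight p s a θ (j - i)) := by
  have hpoly : jap j ^ (2 * p) ≤
      calgKernel p j i * (jap i ^ (2 * p) * jap (j - i) ^ (2 * p)) := by
    have hi := (Real.rpow_pos_of_pos (jap_pos i) (2 * p)).ne'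
    have hji := (Real.rpow_pos_of_pos (jap_pos (j - i)) (2 * p)).ne'
    convert jap_rpow_le_two_rpow_mul i j (by linarith : 1 ≤ 2 * p) using 1
    rw [calgKernel, Real.rpow_neg (jap_pos i).le, Real.rpow_neg (jap_pos _).le]
    field_simp
    ring
  have hexp := (Real.exp_le_exp.mpr (gevreyWeight_exponent_le_add hs ha hθ0 hθ1 i j)).trans_eq
    (Real.exp_add _ _)
  have hrhs : 0 ≤ calgKernel p j i * (jap i ^ (2 * p) * jap (j - i) ^ (2 * p)) :=
    mul_nonneg (calgKernel_nonneg p j i)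
      (mul_nonneg (Real.rpow_nonneg (jap_pos i).le _) (Real.rpow_nonneg (jap_pos _).le _))
  calc gevreyWeight p s a θ j
      ≤ calgKernel p j i * (jap i ^ (2 * p) * jap (j - i) ^ (2 * p)) *
          (Real.exp (2 * a * |(i : ℝ)| + 2 * s * jap i ^ θ) *
            Real.exp (2 * a * |((j - i : ℤ) : ℝ)| + 2 * s * jap (j - i) ^ θ)) :=
        mul_le_mul hpoly hexp (Real.exp_pos _).le hrhs
    _ = _ := by rw [gevreyWeight, gevreyWeight]; ring

lemma summable_and_sq_tsum_le_of_sq_le_mul {ι : Type*} {r f g : ι → ℝ} (hr : 0 ≤ r) (hf : 0 ≤ f)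
    (hg : 0 ≤ g) (hfs : Summable f) (hgs : Summable g) (h : ∀ i, r i ^ 2 ≤ f i * g i) :
    Summable r ∧ (∑' i, r i) ^ 2 ≤ (∑' i, f i) * ∑' i, g i := by
  have hfin : ∀ s : Finset ι, ∑ i ∈ s, r i ≤ Real.sqrt ((∑' i, f i) * ∑' i, g i) := fun s =>
    Real.le_sqrt_of_sq_le <|
      (Finset.sum_sq_le_sum_mul_sum_of_sq_le_mul s (fun i _ => hf i) (fun i _ => hg i)
        fun i _ => h i).trans <|
      mul_le_mul (hfs.sum_le_tsum s fun i _ => hf i) (hgs.sum_le_tsum s fun i _ => hg i)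
        (Finset.sum_nonneg fun i _ => hg i) (tsum_nonneg hf)
  have hrs : Summable r := summable_of_sum_le hr hfin
  refine ⟨hrs, ?_⟩
  calc (∑' i, r i) ^ 2 ≤ Real.sqrt ((∑' i, f i) * ∑' i, g i) ^ 2 :=
        pow_le_pow_left₀ (tsum_nonneg hr) (hrs.tsum_le_of_sum_le hfin) 2
    _ = _ := Real.sq_sqrt (mul_nonneg (tsum_nonneg hf) (tsum_nonneg hg))

section Convolution

variable {G : Type*} [AddCommGroup G]

lemma summable_and_hasSum_tsum_mul_sub {Φ Ψ : G → ℝ} (hΦ0 : 0 ≤ Φ) (hΨ0 : 0 ≤ Ψ)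
    (hΦ : Summable Φ) (hΨ : Summable Ψ) :
    (∀ j, Summable fun i => Φ i * Ψ (j - i)) ∧
      HasSum (fun j => ∑' i, Φ i * Ψ (j - i)) ((∑' i, Φ i) * ∑' i, Ψ i) := by
  let shear : G × G ≃ G × G :=
    { toFun := fun q => (q.2, q.1 - q.2)
      invFun := fun q => (q.1 + q.2, q.1)
      left_inv := fun q => by simp
      right_inv := fun q => by simp }
  have hprod : HasSum (fun q : G × G => Φ q.1 * Ψ q.2) ((∑' i, Φ i) * ∑' i, Ψ i) :=
    hΦ.hasSum.mul hΨ.hasSum (hΦ.mul_of_nonneg hΨ hΦ0 hΨ0)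
  have hsheared : HasSum (fun q : G × G => Φ q.2 * Ψ (q.1 - q.2)) ((∑' i, Φ i) * ∑' i, Ψ i) :=
    shear.hasSum_iff.mpr hprod
  have hfiber : ∀ j, Summable fun i => Φ i * Ψ (j - i) := hsheared.summable.prod_factor
  exact ⟨hfiber, hsheared.prod_fiberwise fun j => (hfiber j).hasSum⟩

variable {R : Type*} [NonUnitalSeminormedRing R]

lemma summable_and_sq_norm_tsum_mul_sub_le {W c : G → ℝ} (hW : ∀ i, 0 < W i) (hc0 : 0 ≤ c)
    (hc : Summable c) {j : G} (hkey : ∀ i, W j ≤ c i * (W i * W (j - i))) (f g : G → R)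
    (hD : Summable fun i => ‖f i‖ ^ 2 * W i * (‖g (j - i)‖ ^ 2 * W (j - i))) :
    (Summable fun i => ‖f i‖ * ‖g (j - i)‖) ∧
      ‖∑' i, f i * g (j - i)‖ ^ 2 * W j ≤
        (∑' i, c i) * ∑' i, ‖f i‖ ^ 2 * W i * (‖g (j - i)‖ ^ 2 * W (j - i)) := by
  have hsq : ∀ i, (Real.sqrt (W j) * (‖f i‖ * ‖g (j - i)‖)) ^ 2 ≤
      c i * (‖f i‖ ^ 2 * W i * (‖g (j - i)‖ ^ 2 * W (j - i))) := fun i => by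
    rw [mul_pow, Real.sq_sqrt (hW j).le]
    calc W j * (‖f i‖ * ‖g (j - i)‖) ^ 2
        ≤ c i * (W i * W (j - i)) * (‖f i‖ * ‖g (j - i)‖) ^ 2 := by gcongr; exact hkey i
      _ = _ := by ring
  obtain ⟨hrs, hCS⟩ := summable_and_sq_tsum_le_of_sq_le_mul
    (fun i => by positivity) hc0 (fun i => by have := hW i; have := hW (j - i); positivity)
    hc hD hsq
  have hT : Summable fun i => ‖f i‖ * ‖g (j - i)‖ :=
    (summable_mul_left_iff (Real.sqrt_pos.mpr (hW j)).ne').mp hrs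
  refine ⟨hT, ?_⟩
  have hnorm : ‖∑' i, f i * g (j - i)‖ ≤ ∑' i, ‖f i‖ * ‖g (j - i)‖ :=
    tsum_of_norm_bounded hT.hasSum fun i => norm_mul_le _ _
  calc ‖∑' i, f i * g (j - i)‖ ^ 2 * W j ≤ (∑' i, ‖f i‖ * ‖g (j - i)‖) ^ 2 * W j := by
        gcongr; exact (hW j).le
    _ = (∑' i, Real.sqrt (W j) * (‖f i‖ * ‖g (j - i)‖)) ^ 2 := by
        rw [tsum_mul_left, mul_pow, Real.sq_sqrt (hW j).le, mul_comm]
    _ ≤ _ := hCS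

theorem convolution_weighted_norm_bound {W : G → ℝ} (hW : ∀ j, 0 < W j) {c : G → G → ℝ}
    {C : ℝ} (hC : 0 ≤ C) (hc0 : ∀ j, 0 ≤ c j) (hc : ∀ j, Summable (c j))
    (hcC : ∀ j, ∑' i, c j i ≤ C ^ 2) (hkey : ∀ j i, W j ≤ c j i * (W i * W (j - i)))
    (f g : G → R) (hf : Summable fun j => ‖f j‖ ^ 2 * W j)
    (hg : Summable fun j => ‖g j‖ ^ 2 * W j) :
    (∀ j, Summable fun i => ‖f i‖ * ‖g (j - i)‖) ∧
    (Summable fun j => ‖∑' i, f i * g (j - i)‖ ^ 2 * W j) ∧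
    Real.sqrt (∑' j, ‖∑' i, f i * g (j - i)‖ ^ 2 * W j) ≤
      C * Real.sqrt (∑' j, ‖f j‖ ^ 2 * W j) * Real.sqrt (∑' j, ‖g j‖ ^ 2 * W j) := by
  have hΦ0 : 0 ≤ fun j => ‖f j‖ ^ 2 * W j := fun j => by have := hW j; positivity
  have hΨ0 : 0 ≤ fun j => ‖g j‖ ^ 2 * W j := fun j => by have := hW j; positivity
  obtain ⟨hD, hYoung⟩ := summable_and_hasSum_tsum_mul_sub hΦ0 hΨ0 hf hg
  have hpt := fun j => summable_and_sq_norm_tsum_mul_sub_le hW (hc0 j) (hc j) (hkey j) f g (hD j)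
  have hbound : ∀ j, ‖∑' i, f i * g (j - i)‖ ^ 2 * W j ≤
      C ^ 2 * ∑' i, ‖f i‖ ^ 2 * W i * (‖g (j - i)‖ ^ 2 * W (j - i)) := fun j =>
    (hpt j).2.trans (mul_le_mul_of_nonneg_right (hcC j) (tsum_nonneg fun i => by
      have := hW i; have := hW (j - i); positivity))
  have hsum : Summable fun j => ‖∑' i, f i * g (j - i)‖ ^ 2 * W j :=
    (hYoung.summable.mul_left (C ^ 2)).of_nonneg_of_le (fun j => by have := hW j; positivity)
      hbound
  refine ⟨fun j => (hpt j).1, hsum, ?_⟩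
  calc Real.sqrt (∑' j, ‖∑' i, f i * g (j - i)‖ ^ 2 * W j)
      ≤ Real.sqrt (C ^ 2 * ((∑' j, ‖f j‖ ^ 2 * W j) * ∑' j, ‖g j‖ ^ 2 * W j)) := by
        refine Real.sqrt_le_sqrt ?_
        rw [← hYoung.tsum_eq, ← tsum_mul_left]
        exact hsum.tsum_le_tsum hbound (hYoung.summable.mul_left _)
    _ = _ := by
        rw [Real.sqrt_mul (sq_nonneg C), Real.sqrt_sq hC, Real.sqrt_mul (tsum_nonneg hΦ0),
          mul_assoc]

end Convolution

/-- For `p > 1/2`, `s ≥ 0`, `a ≥ 0`, `0 < θ < 1`, the convolution of two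
sequences with finite `‖·‖_{p,s,a}` norm is well defined (absolutely convergent) and satisfies
`‖f⋆g‖_{p,s,a} ≤ C_alg(p)·‖f‖_{p,s,a}·‖g‖_{p,s,a}`. -/
theorem convolution_gevrey_norm_bound
    (p s a θ : ℝ) (hp : 1 / 2 < p) (hs : 0 ≤ s) (ha : 0 ≤ a) (hθ0 : 0 < θ) (hθ1 : θ < 1)
    (f g : ℤ → ℂ)
    (hf : Summable fun j : ℤ => ‖f j‖ ^ 2 * gevreyWeight p s a θ j)
    (hg : Summable fun j : ℤ => ‖g j‖ ^ 2 * gevreyWeight p s a θ j) :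
    (∀ j : ℤ, Summable fun i : ℤ => ‖f i‖ * ‖g (j - i)‖) ∧
    (Summable fun j : ℤ => ‖∑' i : ℤ, f i * g (j - i)‖ ^ 2 * gevreyWeight p s a θ j) ∧
    Real.sqrt (∑' j : ℤ, ‖∑' i : ℤ, f i * g (j - i)‖ ^ 2 * gevreyWeight p s a θ j) ≤
      Calg p * Real.sqrt (∑' j : ℤ, ‖f j‖ ^ 2 * gevreyWeight p s a θ j) *
        Real.sqrt (∑' j : ℤ, ‖g j‖ ^ 2 * gevreyWeight p s a θ j) := by
  have hCalg : 0 ≤ Calg p := by unfold Calg; positivity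
  exact convolution_weighted_norm_bound (gevreyWeight_pos p s a θ) hCalg
    (fun j i => calgKernel_nonneg p j i) (fun j => (hasSum_calgKernel hp j).summable)
    (fun j => (hasSum_calgKernel hp j).tsum_eq.le)
    (gevreyWeight_le_calgKernel_mul hp.le hs ha hθ0.le hθ1.le) f g hf hg
end

section
/- With the notation of the context, assume α ≠ β and |∑_{i∈ℤ} (α_i − β_i) i²| ≤ 10 ∑_{i∈ℤ} |α_i − β_i|. Then for every i ∈ ℤ with i ≠ 0 and α_i ≠ β_i one has |i| ≤ 20|π| + 31 ∑_{l=3}^N n̂_l². -/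
open scoped BigOperators

noncomputable def energy (m : ℤ →₀ ℕ) (s : Finset ℤ) : ℝ := ∑ i ∈ s, (m i : ℝ) * jap i ^ 2

lemma one_le_jap_sq (j : ℤ) : 1 ≤ jap j ^ 2 := one_le_pow₀ (one_le_jap j)

lemma abs_le_jap_sq (j : ℤ) : |(j : ℝ)| ≤ jap j ^ 2 :=
  (le_max_left _ _).trans (le_self_pow₀ (one_le_jap j) two_ne_zero)

lemma sq_le_jap_sq (j : ℤ) : (j : ℝ) ^ 2 ≤ jap j ^ 2 := by
  rw [← sq_abs]
  exact pow_le_pow_left₀ (abs_nonneg _) (le_max_left _ _) 2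

lemma abs_intCast_le_sq (i : ℤ) : |(i : ℝ)| ≤ (i : ℝ) ^ 2 := by
  have h := Int.le_self_sq |i|
  rw [sq_abs] at h
  exact_mod_cast h

lemma one_le_abs_intCast_sub {i j : ℤ} (h : i ≠ j) : 1 ≤ |(i : ℝ) - j| := by
  exact_mod_cast Int.one_le_abs (sub_ne_zero.mpr h)

lemma sum_map_sq_nonneg (r : List ℝ) : 0 ≤ (r.map fun x => x ^ 2).sum :=
  List.sum_nonneg fun x hx => by
    obtain ⟨y, -, rfl⟩ := List.mem_map.mp hx
    positivity

lemma sq_le_sum_map_sq {r : List ℝ} {x : ℝ} (hx : x ∈ r) : x ^ 2 ≤ (r.map fun x => x ^ 2).sum :=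
  List.single_le_sum (fun y hy => by
    obtain ⟨z, -, rfl⟩ := List.mem_map.mp hy
    positivity) _ (List.mem_map_of_mem hx)

lemma card_toMultiset_add (α β : ℤ →₀ ℕ) :
    Multiset.card (α + β).toMultiset = (α.sum fun _ n => n) + β.sum fun _ n => n := by
  rw [Finsupp.toMultiset_add, Multiset.card_add, Finsupp.card_toMultiset,
    Finsupp.card_toMultiset]
  rfl

lemma exists_eq_cons_cons_of_map_eq {ι κ : Type*} {f : ι → κ} {s : Multiset ι} {x y : κ}
    {t : Multiset κ} {a : ι} (h : s.map f = x ::ₘ y ::ₘ t) (ha : a ∈ s) (hat : f a ∉ t) :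
    ∃ b R, s = a ::ₘ b ::ₘ R ∧ R.map f = t := by
  classical
  have h' : f a ::ₘ (s.erase a).map f = x ::ₘ y ::ₘ t := by
    rw [← Multiset.map_cons, Multiset.cons_erase ha, h]
  obtain ⟨z, hz⟩ : ∃ z, (s.erase a).map f = z ::ₘ t := by
    have hfa : f a ∈ x ::ₘ y ::ₘ t := h' ▸ Multiset.mem_cons_self _ _
    rcases Multiset.mem_cons.mp hfa with rfl | hfa
    · exact ⟨y, (Multiset.cons_inj_right _).mp h'⟩
    rcases Multiset.mem_cons.mp hfa with rfl | hfa
    · rw [Multiset.cons_swap] at h'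
      exact ⟨x, (Multiset.cons_inj_right _).mp h'⟩
    · exact absurd hfa hat
  obtain ⟨b, hb, -, hR⟩ := (Multiset.map_eq_cons f _ t z).mpr hz
  exact ⟨b, _, by rw [Multiset.cons_erase hb, Multiset.cons_erase ha], hR⟩

lemma abs_le_of_signed_pair {i j : ℤ} (hij : i ≠ j) {u w π T : ℝ} (hu : |u| = 1)
    (hw : w = u ∨ w = -u) (hmom : |i * u + j * w - π| ≤ T) (hzero : |u + w| ≤ T)
    (hsq : |u * i ^ 2 + w * j ^ 2| ≤ 20 + 11 * T) :
    |(i : ℝ)| ≤ 20 * |π| + 31 * T := by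
  rcases hw with rfl | rfl
  · have hT : 2 ≤ T := by rwa [← two_mul, abs_mul, hu, abs_two, mul_one] at hzero
    have hsq' : (i : ℝ) ^ 2 + j ^ 2 ≤ 20 + 11 * T := by
      rwa [← mul_add, abs_mul, hu, one_mul, abs_of_nonneg (by positivity)] at hsq
    linarith [abs_intCast_le_sq i, sq_nonneg (j : ℝ), abs_nonneg π]
  · have hdiff : |(i : ℝ) - j| ≤ |π| + T := by
      rw [show (i : ℝ) * u + j * -u = (i - j) * u by ring] at hmom
      have h := abs_sub_abs_le_abs_sub ((i - j) * u) π
      rw [abs_mul, hu, mul_one] at h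
      linarith
    have hdiff1 : 1 ≤ |(i : ℝ) - j| := one_le_abs_intCast_sub hij
    have hsum : |(i : ℝ) + j| ≤ 20 + 11 * T := by
      rw [show u * i ^ 2 + -u * j ^ 2 = u * ((i + j) * (i - j)) by ring, abs_mul, hu, one_mul,
        abs_mul] at hsq
      exact (le_mul_of_one_le_right (abs_nonneg _) hdiff1).trans hsq
    have htwo : 2 * |(i : ℝ)| ≤ |(i : ℝ) + j| + |(i : ℝ) - j| := by
      have h := abs_add_le ((i : ℝ) + j) (i - j)
      rwa [show (i : ℝ) + j + (i - j) = 2 * i by ring, abs_mul, abs_two] at h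
    have hT : 0 ≤ T := (abs_nonneg _).trans hzero
    linarith [abs_nonneg π]

section energy

variable {α β : ℤ →₀ ℕ} {s : Finset ℤ}

lemma energy_eq_sum_map_toMultiset {m : ℤ →₀ ℕ} (hs : m.support ⊆ s) :
    energy m s = (m.toMultiset.map fun i => jap i ^ 2).sum := by
  classical
  rw [Finset.sum_multiset_map_count, Finsupp.toFinset_toMultiset, energy]
  simp only [Finsupp.count_toMultiset, nsmul_eq_mul]
  exact (Finset.sum_subset hs fun i _ hi => by simp [Finsupp.notMem_support_iff.mp hi]).symm

lemma sum_abs_sub_mul_le_energy {w : ℤ → ℝ} (hw : ∀ i, |w i| ≤ jap i ^ 2) :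
    ∑ i ∈ s, |(α i : ℝ) - β i| * |w i| ≤ energy (α + β) s := by
  refine Finset.sum_le_sum fun i _ => ?_
  rw [Finsupp.add_apply, Nat.cast_add]
  exact mul_le_mul ((abs_sub _ _).trans_eq (by simp)) (hw i) (abs_nonneg _) (by positivity)

lemma abs_sum_sub_mul_le_energy (w : ℤ → ℝ) (hw : ∀ i, |w i| ≤ jap i ^ 2) :
    |∑ i ∈ s, ((α i : ℝ) - β i) * w i| ≤ energy (α + β) s :=
  (Finset.abs_sum_le_sum_abs _ _).trans
    (by simpa only [abs_mul] using sum_abs_sub_mul_le_energy hw)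

lemma sum_sub_eq_zero_of_sum_eq (hα : α.support ⊆ s) (hβ : β.support ⊆ s)
    (hmass : (α.sum fun _ n => n) = β.sum fun _ n => n) :
    ∑ i ∈ s, ((α i : ℝ) - β i) = 0 := by
  rw [Finset.sum_sub_distrib, sub_eq_zero]
  have h := congrArg (Nat.cast : ℕ → ℝ) hmass
  rwa [Finsupp.sum_of_support_subset α hα _ (by simp),
    Finsupp.sum_of_support_subset β hβ _ (by simp), Nat.cast_sum, Nat.cast_sum] at h

lemma energy_eq_of_toMultiset_eq {m : ℤ →₀ ℕ} {a b : ℤ} {R : Multiset ℤ} {r : List ℝ}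
    (hs : m.support ⊆ s) (hm : m.toMultiset = a ::ₘ b ::ₘ R) (hR : R.map jap = r) :
    energy m s = jap a ^ 2 + jap b ^ 2 + (r.map fun x => x ^ 2).sum := by
  rw [energy_eq_sum_map_toMultiset hs, hm, ← Multiset.sum_coe, ← Multiset.map_coe, ← hR,
    Multiset.map_map]
  simp only [Multiset.map_cons, Multiset.sum_cons, Function.comp_def]
  ring

lemma energy_erase_le_or_eq_of_toMultiset_eq {m : ℤ →₀ ℕ} {a b : ℤ} {R : Multiset ℤ}
    {r : List ℝ} (hs : m.support ⊆ s) (hm : m.toMultiset = a ::ₘ b ::ₘ R) (hR : R.map jap = r)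
    (har : jap a ∉ r) :
    energy m (s.erase a) ≤ 2 * (r.map fun x => x ^ 2).sum ∨
      b ≠ a ∧ m a = 1 ∧ m b = 1 ∧ energy m (s \ {a, b}) = (r.map fun x => x ^ 2).sum := by
  classical
  have hE := energy_eq_of_toMultiset_eq hs hm hR
  set T := (r.map fun x => x ^ 2).sum
  have hT : 0 ≤ T := sum_map_sq_nonneg r
  have hjap_mem {i : ℤ} (hi : i ∈ R) : jap i ∈ r :=
    Multiset.mem_coe.mp (hR ▸ Multiset.mem_map_of_mem jap hi)
  have haR : a ∉ R := fun ha => har (hjap_mem ha)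
  have hcount : ∀ i, m i = Multiset.count i (a ::ₘ b ::ₘ R) := fun i => by
    rw [← hm, Finsupp.count_toMultiset]
  have hmem : ∀ i, i ∈ a ::ₘ b ::ₘ R → i ∈ s := fun i hi => hs <| by
    rwa [← Finsupp.mem_toMultiset, hm]
  have herase : energy m (s.erase a) = energy m s - m a * jap a ^ 2 := by
    rw [energy, energy, ← Finset.add_sum_erase s _ (hmem a (Multiset.mem_cons_self _ _))]
    ring
  have haR' := Multiset.count_eq_zero.mpr haR
  rcases eq_or_ne b a with rfl | hba
  · left
    have hmb : m b = 2 := by simp [hcount, haR']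
    rw [herase, hE, hmb]
    push_cast
    linarith
  have hma : m a = 1 := by simp [hcount, haR', hba.symm]
  by_cases hbR : b ∈ R
  · left
    have hbT := sq_le_sum_map_sq (hjap_mem hbR)
    rw [herase, hE, hma]
    push_cast
    linarith
  have hmb : m b = 1 := by simp [hcount, Multiset.count_eq_zero.mpr hbR, hba]
  refine .inr ⟨hba, hma, hmb, ?_⟩
  have hpair : {a, b} ⊆ s := by
    simp [Finset.insert_subset_iff, hmem]
  have hsplit := Finset.sum_sdiff hpair (f := fun i => (m i : ℝ) * jap i ^ 2)
  rw [Finset.sum_pair hba.symm, hma, hmb] at hsplit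
  rw [energy] at hE ⊢
  push_cast at hsplit
  linarith

lemma abs_le_of_energy_erase_le {π K : ℝ} {i₀ : ℤ} (hi₀ : i₀ ∈ s)
    (hπ : π = ∑ i ∈ s, (i : ℝ) * ((α i : ℝ) - β i)) (hg : α i₀ ≠ β i₀)
    (hK : energy (α + β) (s.erase i₀) ≤ K) :
    |(i₀ : ℝ)| ≤ |π| + K := by
  set rest := ∑ i ∈ s.erase i₀, ((α i : ℝ) - β i) * i
  have hsplit : π = i₀ * ((α i₀ : ℝ) - β i₀) + rest := by
    rw [hπ, ← Finset.add_sum_erase _ _ hi₀]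
    exact congrArg _ (Finset.sum_congr rfl fun i _ => mul_comm _ _)
  have hrest : |rest| ≤ K := (abs_sum_sub_mul_le_energy _ abs_le_jap_sq).trans hK
  have hg1 : 1 ≤ |(α i₀ : ℝ) - β i₀| := by
    exact_mod_cast one_le_abs_intCast_sub (Int.natCast_inj.not.mpr hg)
  calc |(i₀ : ℝ)| ≤ |(i₀ : ℝ) * ((α i₀ : ℝ) - β i₀)| := by
        rw [abs_mul]; exact le_mul_of_one_le_right (abs_nonneg _) hg1
    _ = |π - rest| := by rw [hsplit, add_sub_cancel_right]
    _ ≤ |π| + |rest| := abs_sub _ _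
    _ ≤ |π| + K := by linarith

lemma abs_le_of_energy_sdiff_pair_le {π T : ℝ} {i j : ℤ}
    (hij : i ≠ j) (his : i ∈ s) (hjs : j ∈ s) (hmi : (α + β) i = 1) (hmj : (α + β) j = 1)
    (hmass : ∑ k ∈ s, ((α k : ℝ) - β k) = 0)
    (hπ : π = ∑ k ∈ s, (k : ℝ) * ((α k : ℝ) - β k))
    (hsmall : |∑ k ∈ s, ((α k : ℝ) - β k) * (k : ℝ) ^ 2| ≤
      10 * ∑ k ∈ s, |(α k : ℝ) - β k|)
    (hrest : energy (α + β) (s \ {i, j}) ≤ T) :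
    |(i : ℝ)| ≤ 20 * |π| + 31 * T := by
  have hsplit (f : ℤ → ℝ) : ∑ k ∈ s, f k = f i + f j + ∑ k ∈ s \ {i, j}, f k := by
    rw [← Finset.sum_sdiff (Finset.insert_subset his (Finset.singleton_subset_iff.mpr hjs)),
      Finset.sum_pair hij]
    ring
  have hunit (k : ℤ) (hk : (α + β) k = 1) : |(α k : ℝ) - β k| = 1 := by
    rw [Finsupp.add_apply] at hk
    rcases Nat.add_eq_one_iff.mp hk with ⟨ha, hb⟩ | ⟨ha, hb⟩ <;> simp [ha, hb]
  have hrest_le (v : ℤ → ℝ) (hv : ∀ k, |v k| ≤ jap k ^ 2) :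
      |∑ k ∈ s \ {i, j}, ((α k : ℝ) - β k) * v k| ≤ T :=
    (abs_sum_sub_mul_le_energy v hv).trans hrest
  have hrest_one := hrest_le (fun _ => 1) fun k => by simpa using one_le_jap_sq k
  refine abs_le_of_signed_pair hij (hunit i hmi)
    (abs_eq_abs.mp ((hunit j hmj).trans (hunit i hmi).symm)) ?_ ?_ ?_
  · have h := hrest_le (fun k => k) abs_le_jap_sq
    rw [hπ, hsplit fun k => (k : ℝ) * ((α k : ℝ) - β k), ← abs_neg]
    convert h using 2
    rw [neg_sub, add_sub_cancel_left]
    exact Finset.sum_congr rfl fun k _ => mul_comm _ _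
  · rw [hsplit] at hmass
    simp only [mul_one] at hrest_one
    rwa [show (α i : ℝ) - β i + ((α j : ℝ) - β j) = -∑ k ∈ s \ {i, j}, ((α k : ℝ) - β k) by
      linarith, abs_neg]
  · have hsq := hrest_le (fun k => (k : ℝ) ^ 2) fun k => by
      rw [abs_of_nonneg (sq_nonneg _)]; exact sq_le_jap_sq k
    have habs : ∑ k ∈ s \ {i, j}, |(α k : ℝ) - β k| ≤ T := by
      simpa using (sum_abs_sub_mul_le_energy (s := s \ {i, j}) (w := fun _ => 1)
        fun k => by simpa using one_le_jap_sq k).trans hrest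
    rw [hsplit fun k => ((α k : ℝ) - β k) * (k : ℝ) ^ 2, hsplit fun k => |(α k : ℝ) - β k|,
      hunit i hmi, hunit j hmj] at hsmall
    have h := abs_sub (((α i : ℝ) - β i) * i ^ 2 + ((α j : ℝ) - β j) * j ^ 2 +
      ∑ k ∈ s \ {i, j}, ((α k : ℝ) - β k) * (k : ℝ) ^ 2)
      (∑ k ∈ s \ {i, j}, ((α k : ℝ) - β k) * (k : ℝ) ^ 2)
    rw [add_sub_cancel_right] at h
    linarith

end energy

theorem abs_index_le_of_small_divisor_general
    (α β : ℤ →₀ ℕ)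
    (hmass : (α.sum fun _ n => n) = β.sum fun _ n => n)
    (hmass1 : 1 ≤ α.sum fun _ n => n)
    (L : List ℝ)
    (hL : (L : Multiset ℝ) = Multiset.map jap (α + β).toMultiset)
    (π : ℝ)
    (hπ : π = ∑ i ∈ α.support ∪ β.support, (i : ℝ) * ((α i : ℝ) - (β i : ℝ)))
    (hsmall : |∑ i ∈ α.support ∪ β.support, ((α i : ℝ) - (β i : ℝ)) * (i : ℝ) ^ 2| ≤
      10 * ∑ i ∈ α.support ∪ β.support, |(α i : ℝ) - (β i : ℝ)|) :
    ∀ i : ℤ, i ≠ 0 → α i ≠ β i →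
      (|(i : ℝ)|) ≤ 20 * |π| + 31 * ((L.drop 2).map fun x => x ^ 2).sum := by
  classical
  intro i₀ _ hg
  have hsupp : (α + β).support ⊆ α.support ∪ β.support := Finsupp.support_add
  have hi₀ : i₀ ∈ (α + β).support := by
    rw [Finsupp.mem_support_iff, Finsupp.add_apply]; omega
  have hlen : 2 ≤ L.length := by
    have h := congrArg Multiset.card hL
    rw [Multiset.coe_card, Multiset.card_map, card_toMultiset_add] at h
    omega
  obtain _ | ⟨x₁, _ | ⟨x₂, r⟩⟩ := L
  · simp at hlen
  · simp at hlen
  simp only [List.drop_succ_cons, List.drop_zero]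
  have hT := sum_map_sq_nonneg r
  by_cases hr : jap i₀ ∈ r
  · linarith [abs_le_jap_sq i₀, sq_le_sum_map_sq hr, abs_nonneg π]
  rw [← Multiset.cons_coe, ← Multiset.cons_coe] at hL
  obtain ⟨b, R, hm, hR⟩ := exists_eq_cons_cons_of_map_eq hL.symm
    ((Finsupp.mem_toMultiset _ _).mpr hi₀) (Multiset.mem_coe.not.mpr hr)
  rcases energy_erase_le_or_eq_of_toMultiset_eq hsupp hm hR hr with hK | ⟨hb, hm₀, hmb, hrest⟩
  · linarith [abs_le_of_energy_erase_le (hsupp hi₀) hπ hg hK, abs_nonneg π]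
  · exact abs_le_of_energy_sdiff_pair_le hb.symm (hsupp hi₀) (hsupp (by simp [hmb])) hm₀ hmb
      (sum_sub_eq_zero_of_sum_eq Finset.subset_union_left Finset.subset_union_right hmass)
      hπ hsmall hrest.le

/-- If `α ≠ β` and `|∑ (α_i−β_i) i²| ≤ 10 ∑ |α_i−β_i|`, then every `i ≠ 0`
with `α_i ≠ β_i` satisfies `|i| ≤ 20|π| + 31 ∑_{l≥3} n̂_l²` (the decreasing rearrangement `n̂`
being encoded by the sorted list `L`). -/
theorem abs_index_le_of_small_divisor
    (α β : ℤ →₀ ℕ) (hne : α ≠ β)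
    (hmass : (α.sum fun _ n => n) = β.sum fun _ n => n)
    (hmass1 : 1 ≤ α.sum fun _ n => n)
    (L : List ℝ) (hsort : L.Pairwise (· ≥ ·))
    (hL : (L : Multiset ℝ) = Multiset.map jap (α + β).toMultiset)
    (π : ℝ)
    (hπ : π = ∑ i ∈ α.support ∪ β.support, (i : ℝ) * ((α i : ℝ) - (β i : ℝ)))
    (hsmall : |∑ i ∈ α.support ∪ β.support, ((α i : ℝ) - (β i : ℝ)) * (i : ℝ) ^ 2| ≤
      10 * ∑ i ∈ α.support ∪ β.support, |(α i : ℝ) - (β i : ℝ)|) :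
    ∀ i : ℤ, i ≠ 0 → α i ≠ β i →
      (|(i : ℝ)|) ≤ 20 * |π| + 31 * ((L.drop 2).map fun x => x ^ 2).sum :=
  abs_index_le_of_small_divisor_general α β hmass hmass1 L hL π hπ hsmall
end

section
/- Fix 0 < θ < 1, q ≥ 0 and 0 < σ ≤ 1, set C* := 13/(1−θ), define f_i(x) := −(σ/C*)·x·⟨i⟩^{θ/2} + ln(1 + x²·⟨i⟩^{2+q}) for i ∈ ℤ and x ≥ 0, and set i# := ((8C*(q+3)/(σθ))·ln(4C*(q+3)/(σθ)))^{2/θ}. Then for every finitely supported nonzero ℓ : ℤ → ℤ one has ∑_{i∈ℤ} f_i(|ℓ_i|) ≤ 7(q+3)·i#·ln(i#) − (σ/(2C*))·(n̂_1(ℓ))^{θ/2}, where n̂_1(ℓ) := max{⟨i⟩ : i ∈ ℤ, ℓ_i ≠ 0}. -/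
open scoped BigOperators

lemma log_le_half {y : ℝ} (hy : 0 < y) : Real.log y ≤ y / 2 := by
  have h := Real.log_le_sub_one_of_pos (show (0:ℝ) < y/2 by linarith)
  have h2 : Real.log (y/2) = Real.log y - Real.log 2 :=
    Real.log_div (ne_of_gt hy) two_ne_zero
  have h3 := Real.log_two_lt_d9
  linarith

lemma key_ineq (θ q σ C : ℝ) (hθ0 : 0 < θ) (hθ1 : θ < 1) (hq : 0 ≤ q)
    (hσ0 : 0 < σ) (hC : 0 < C) (x t : ℝ) (hx : 1 ≤ x) (ht : 1 ≤ t) :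
    -(σ / C) * x * t ^ (θ / 2) + Real.log (1 + x ^ 2 * t ^ (2 + q)) ≤
      -(σ / (2 * C)) * x * t ^ (θ / 2) +
        ((q + 3) * (Real.log (2 * (4 * C * (q + 3) / (σ * θ))) + (1 - θ / 2) * Real.log t)
          - σ / C * (1 / 2 - θ / 8) * t ^ (θ / 2)) := by
  have hx0 : (0:ℝ) < x := by linarith
  have ht0 : (0:ℝ) < t := by linarith
  have hτ : (0:ℝ) < t ^ (θ / 2) := Real.rpow_pos_of_pos ht0 _
  have htq : (0:ℝ) < t ^ (2 + q) := Real.rpow_pos_of_pos ht0 _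
  have hx2 : (1:ℝ) ≤ x ^ 2 := one_le_pow₀ hx
  have htq1 : (1:ℝ) ≤ t ^ (2 + q) := Real.one_le_rpow ht (by linarith)
  have hlx : 0 ≤ Real.log x := Real.log_nonneg hx
  have hlt : 0 ≤ Real.log t := Real.log_nonneg ht
  set M : ℝ := 4 * C * (q + 3) / (σ * θ) with hMdef
  have hM0 : 0 < M := by
    apply div_pos (by nlinarith) (by positivity)
  -- step 1+2 : log(1 + x^2 t^(2+q)) ≤ (q+3)(1 + log x + log t)
  have step12 : Real.log (1 + x ^ 2 * t ^ (2 + q)) ≤ (q + 3) * (1 + Real.log x + Real.log t) := by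
    have h1 : 1 + x ^ 2 * t ^ (2 + q) ≤ 2 * (x ^ 2 * t ^ (2 + q)) := by nlinarith
    have h2 : Real.log (1 + x ^ 2 * t ^ (2 + q)) ≤ Real.log (2 * (x ^ 2 * t ^ (2 + q))) :=
      Real.log_le_log (by positivity) h1
    have h3 : Real.log (2 * (x ^ 2 * t ^ (2 + q)))
        = Real.log 2 + 2 * Real.log x + (2 + q) * Real.log t := by
      rw [Real.log_mul (by norm_num) (by positivity), Real.log_mul (by positivity) (by positivity),
        Real.log_pow, Real.log_rpow ht0]
      push_cast; ring
    have h4 := Real.log_two_lt_d9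
    nlinarith
  -- step 3 : (q+3) log x ≤ σθ/(8C) x t^(θ/2) + (q+3)(log(2M) - (θ/2) log t - 1)
  have step3 : (q + 3) * Real.log x ≤
      σ * θ / (8 * C) * (x * t ^ (θ / 2)) +
        (q + 3) * (Real.log (2 * M) - θ / 2 * Real.log t - 1) := by
    set a : ℝ := 2 * M / t ^ (θ / 2) with hadef
    have ha : 0 < a := by positivity
    have h1 : Real.log (x / a) ≤ x / a - 1 := Real.log_le_sub_one_of_pos (by positivity)
    have h2 : Real.log (x / a) = Real.log x - Real.log a :=
      Real.log_div (ne_of_gt hx0) (ne_of_gt ha)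
    have h3 : Real.log a = Real.log (2 * M) - θ / 2 * Real.log t := by
      rw [hadef, Real.log_div (by positivity) (ne_of_gt hτ), Real.log_rpow ht0]
    have h4 : (q + 3) * (x / a) = σ * θ / (8 * C) * (x * t ^ (θ / 2)) := by
      rw [hadef, hMdef]
      field_simp
      ring
    have h5 : Real.log x ≤ x / a + Real.log (2 * M) - θ / 2 * Real.log t - 1 := by
      linarith
    nlinarith [h5, hq]
  -- combine
  have hcoef : 0 < σ / C * (1 / 2 - θ / 8) := by
    apply mul_pos (by positivity); linarith
  have e1 : σ / (2 * C) = σ / C * (1 / 2) := by field_simp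
  have e2 : σ * θ / (8 * C) = σ / C * (θ / 8) := by field_simp
  rw [e1]
  rw [e2] at step3
  nlinarith [mul_nonneg (sub_nonneg.2 hx) (mul_nonneg hcoef.le hτ.le), step12, step3]

set_option maxHeartbeats 1000000 in
lemma R_nonpos (θ q σ C : ℝ) (hθ0 : 0 < θ) (hθ1 : θ < 1) (hq : 0 ≤ q)
    (hσ0 : 0 < σ) (hσ1 : σ ≤ 1) (hC13 : 13 ≤ C) (t : ℝ) (ht : 1 ≤ t)
    (htI : (2 * (4 * C * (q + 3) / (σ * θ)) * Real.log (4 * C * (q + 3) / (σ * θ))) ^ (2 / θ) ≤ t) :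
    (q + 3) * (Real.log (2 * (4 * C * (q + 3) / (σ * θ))) + (1 - θ / 2) * Real.log t)
      - σ / C * (1 / 2 - θ / 8) * t ^ (θ / 2) ≤ 0 := by
  have hC0 : (0:ℝ) < C := by linarith
  have hστ : (0:ℝ) < σ * θ := mul_pos hσ0 hθ0
  have hστ1 : σ * θ ≤ 1 := by nlinarith
  set M : ℝ := 4 * C * (q + 3) / (σ * θ) with hMdef
  have hM156 : (156:ℝ) ≤ M := by
    rw [hMdef, le_div_iff₀ hστ]
    nlinarith [mul_nonneg hC0.le hq]
  have hM0 : (0:ℝ) < M := by linarith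
  have hL1 : (1:ℝ) ≤ Real.log M := by
    rw [Real.le_log_iff_exp_le hM0]
    exact Real.exp_one_lt_d9.le.trans (by linarith)
  have hlog2 : (0:ℝ) < Real.log 2 := Real.log_pos (by norm_num)
  have hlog2' : Real.log 2 < 1 := by
    have := Real.log_two_lt_d9; linarith
  have hL4 : 4 * Real.log 2 ≤ Real.log M := by
    have h16 : Real.log 16 ≤ Real.log M := Real.log_le_log (by norm_num) (by linarith)
    have he : Real.log 16 = 4 * Real.log 2 := by
      rw [show (16:ℝ) = 2 ^ (4:ℕ) by norm_num, Real.log_pow]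
      push_cast; ring
    linarith
  set L : ℝ := Real.log M with hLdef
  have hLL : Real.log L ≤ L / 2 := log_le_half (by linarith)
  have hLL0 : 0 ≤ Real.log L := Real.log_nonneg hL1
  set s₀ : ℝ := 2 * M * L with hs0def
  have hs₀pos : (0:ℝ) < s₀ := by rw [hs0def]; nlinarith
  have hs₀1 : (1:ℝ) ≤ s₀ := by rw [hs0def]; nlinarith
  have hlogs₀ : Real.log s₀ = Real.log 2 + L + Real.log L := by
    rw [hs0def, Real.log_mul (by positivity) (by positivity : (0:ℝ) < L).ne',
      Real.log_mul (by norm_num) hM0.ne', hLdef]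
  have hcs₀ : σ / C * (1 / 2 - θ / 8) * s₀ = (q + 3) * (2 * (2 / θ) - 1) * L := by
    rw [hs0def, hMdef]
    field_simp
    ring
  clear_value L
  clear_value s₀
  set s : ℝ := t ^ (θ / 2) with hsdef
  have ht0 : (0:ℝ) < t := by linarith
  have hspos : (0:ℝ) < s := Real.rpow_pos_of_pos ht0 _
  have hlogts : Real.log s = θ / 2 * Real.log t := Real.log_rpow ht0 _
  have hss₀ : s₀ ≤ s := by
    have h1 : (s₀ ^ (2 / θ)) ^ (θ / 2) ≤ t ^ (θ / 2) :=
      Real.rpow_le_rpow (by positivity) htI (by positivity)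
    have h2 : (s₀ ^ (2 / θ)) ^ (θ / 2) = s₀ := by
      rw [← Real.rpow_mul hs₀pos.le]
      rw [show 2 / θ * (θ / 2) = 1 by field_simp]
      exact Real.rpow_one s₀
    rw [hsdef]; linarith [h2 ▸ h1]
  clear_value s
  have hlogt : Real.log t = 2 / θ * Real.log s := by
    rw [hlogts]; field_simp
  have hlogs : Real.log s ≤ s / s₀ + (Real.log 2 + L + Real.log L) - 1 := by
    have h1 : Real.log (s / s₀) ≤ s / s₀ - 1 := Real.log_le_sub_one_of_pos (by positivity)
    have h2 : Real.log (s / s₀) = Real.log s - Real.log s₀ :=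
      Real.log_div hspos.ne' hs₀pos.ne'
    rw [← hlogs₀]; linarith
  have hlog2M : Real.log (2 * M) = Real.log 2 + L := by
    rw [Real.log_mul (by norm_num) hM0.ne', hLdef]
  rw [hlog2M]
  set u : ℝ := 2 / θ with hudef
  have hu2 : (2:ℝ) < u := by
    rw [hudef, lt_div_iff₀ hθ0]; linarith
  have hu1 : (1 - θ / 2) * Real.log t = (u - 1) * Real.log s := by
    rw [hlogt, hudef]
    field_simp
  rw [hu1]
  clear_value u
  have hβ0 : (0:ℝ) ≤ (q + 3) * (u - 1) := by nlinarith
  have hc0 : (0:ℝ) < σ / C * (1 / 2 - θ / 8) := by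
    apply mul_pos (by positivity); linarith
  have hq3 : (0:ℝ) ≤ q + 3 := by linarith
  have hβle : (q + 3) * (u - 1) ≤ σ / C * (1 / 2 - θ / 8) * s₀ := by
    rw [hcs₀]
    nlinarith [mul_nonneg hq3 (mul_nonneg (by linarith : (0:ℝ) ≤ 2 * u - 1)
      (by linarith : (0:ℝ) ≤ L - 1)), mul_nonneg hq3 (by linarith : (0:ℝ) ≤ u)]
  have h1 : (q + 3) * (u - 1) * Real.log s ≤
      (q + 3) * (u - 1) * (s / s₀ + (Real.log 2 + L + Real.log L) - 1) :=
    mul_le_mul_of_nonneg_left hlogs hβ0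
  have h2 : (q + 3) * (u - 1) * (s / s₀) ≤
      σ / C * (1 / 2 - θ / 8) * s - σ / C * (1 / 2 - θ / 8) * s₀ + (q + 3) * (u - 1) := by
    have ha := mul_le_mul_of_nonneg_right hβle (sub_nonneg.2 hss₀)
    have e1 : (q + 3) * (u - 1) * (s / s₀)
        = (q + 3) * (u - 1) * (s - s₀) / s₀ + (q + 3) * (u - 1) := by
      field_simp; ring
    have e2 : (q + 3) * (u - 1) * (s - s₀) / s₀ ≤ σ / C * (1 / 2 - θ / 8) * (s - s₀) := by
      rw [div_le_iff₀ hs₀pos]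
      nlinarith [ha]
    rw [e1]; nlinarith [e2]
  clear hlogt hlogts hlogs hlogs₀ htI hsdef hs0def hMdef hLdef ht ht0 hss₀ hβle hβ0
  nlinarith [h1, h2, hcs₀,
    mul_nonneg hq3 (mul_nonneg (by linarith : (0:ℝ) ≤ u - 2) hlog2.le),
    mul_nonneg hq3 (mul_nonneg (by linarith : (0:ℝ) ≤ u - 1) (by linarith : (0:ℝ) ≤ L / 2 - Real.log L)),
    mul_nonneg hq3 (mul_nonneg (by linarith : (0:ℝ) ≤ u - 1) (by linarith : (0:ℝ) ≤ L - 4 * Real.log 2))]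

set_option maxHeartbeats 1000000 in
lemma R_le_G (θ q σ C : ℝ) (hθ0 : 0 < θ) (hθ1 : θ < 1) (hq : 0 ≤ q)
    (hσ0 : 0 < σ) (hσ1 : σ ≤ 1) (hC13 : 13 ≤ C) (t : ℝ) (ht : 1 ≤ t)
    (htI : t ≤ (2 * (4 * C * (q + 3) / (σ * θ)) * Real.log (4 * C * (q + 3) / (σ * θ))) ^ (2 / θ)) :
    (q + 3) * (Real.log (2 * (4 * C * (q + 3) / (σ * θ))) + (1 - θ / 2) * Real.log t)
      - σ / C * (1 / 2 - θ / 8) * t ^ (θ / 2) ≤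
    2 * (q + 3) * Real.log
      ((2 * (4 * C * (q + 3) / (σ * θ)) * Real.log (4 * C * (q + 3) / (σ * θ))) ^ (2 / θ)) := by
  have hC0 : (0:ℝ) < C := by linarith
  have hστ : (0:ℝ) < σ * θ := mul_pos hσ0 hθ0
  have hστ1 : σ * θ ≤ 1 := by nlinarith
  set M : ℝ := 4 * C * (q + 3) / (σ * θ) with hMdef
  have hM156 : (156:ℝ) ≤ M := by
    rw [hMdef, le_div_iff₀ hστ]
    nlinarith [mul_nonneg hC0.le hq]
  have hM0 : (0:ℝ) < M := by linarith
  have hL1 : (1:ℝ) ≤ Real.log M := by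
    rw [Real.le_log_iff_exp_le hM0]
    exact Real.exp_one_lt_d9.le.trans (by linarith)
  have hLL0 : 0 ≤ Real.log (Real.log M) := Real.log_nonneg hL1
  have hlog2 : (0:ℝ) < Real.log 2 := Real.log_pos (by norm_num)
  have hs₀pos : (0:ℝ) < 2 * M * Real.log M := by nlinarith
  have hlogI : Real.log ((2 * M * Real.log M) ^ (2 / θ))
      = 2 / θ * (Real.log 2 + Real.log M + Real.log (Real.log M)) := by
    rw [Real.log_rpow hs₀pos, Real.log_mul (by positivity) (by positivity : (0:ℝ) < Real.log M).ne',
      Real.log_mul (by norm_num) hM0.ne']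
  have hlog2M : Real.log (2 * M) = Real.log 2 + Real.log M :=
    Real.log_mul (by norm_num) hM0.ne'
  have ht0 : (0:ℝ) < t := by linarith
  have hlt0 : 0 ≤ Real.log t := Real.log_nonneg ht
  have hltI : Real.log t ≤ Real.log ((2 * M * Real.log M) ^ (2 / θ)) :=
    Real.log_le_log ht0 htI
  have hτ : (0:ℝ) ≤ σ / C * (1 / 2 - θ / 8) * t ^ (θ / 2) := by
    apply mul_nonneg (mul_nonneg (by positivity) (by linarith))
    positivity
  have hu1 : (1:ℝ) ≤ 2 / θ := by
    rw [le_div_iff₀ hθ0]; linarith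
  have h2M : Real.log (2 * M) ≤ Real.log ((2 * M * Real.log M) ^ (2 / θ)) := by
    rw [hlogI, hlog2M]
    nlinarith [hu1, hlog2, hL1, hLL0]
  have hmain : Real.log (2 * M) + (1 - θ / 2) * Real.log t ≤
      2 * Real.log ((2 * M * Real.log M) ^ (2 / θ)) := by
    nlinarith [hltI, hlt0, h2M]
  have hq3 : (0:ℝ) ≤ q + 3 := by linarith
  nlinarith [mul_le_mul_of_nonneg_left hmain hq3, hτ]


set_option maxHeartbeats 1000000 in
/-- With `C* := 13/(1−θ)`,
`f_i(x) := −(σ/C*)x⟨i⟩^{θ/2} + ln(1 + x²⟨i⟩^{2+q})` and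
`i# := ((8C*(q+3)/(σθ))·ln(4C*(q+3)/(σθ)))^{2/θ}`, for every finitely supported nonzero
`ℓ : ℤ → ℤ` one has
`∑_i f_i(|ℓ_i|) ≤ 7(q+3)·i#·ln i# − (σ/(2C*))·n̂₁(ℓ)^{θ/2}`,
where `n̂₁(ℓ) = max{⟨i⟩ : ℓ_i ≠ 0}`. -/
theorem sum_f_le
    (θ q σ : ℝ) (hθ0 : 0 < θ) (hθ1 : θ < 1) (hq : 0 ≤ q) (hσ0 : 0 < σ) (hσ1 : σ ≤ 1)
    (ℓ : ℤ →₀ ℤ) (hℓ : ℓ ≠ 0) :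
    (∑ i ∈ ℓ.support,
        (-(σ / (13 / (1 - θ))) * |(ℓ i : ℝ)| * jap i ^ (θ / 2) +
          Real.log (1 + |(ℓ i : ℝ)| ^ 2 * jap i ^ (2 + q)))) ≤
      7 * (q + 3) *
          ((8 * (13 / (1 - θ)) * (q + 3) / (σ * θ)) *
              Real.log (4 * (13 / (1 - θ)) * (q + 3) / (σ * θ))) ^ (2 / θ) *
          Real.log (((8 * (13 / (1 - θ)) * (q + 3) / (σ * θ)) *
              Real.log (4 * (13 / (1 - θ)) * (q + 3) / (σ * θ))) ^ (2 / θ)) -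
        (σ / (2 * (13 / (1 - θ)))) *
          (ℓ.support.sup' (Finsupp.support_nonempty_iff.mpr hℓ) jap) ^ (θ / 2) := by
  have h1θ : (0:ℝ) < 1 - θ := by linarith
  set C : ℝ := 13 / (1 - θ) with hCdef
  have hC13 : (13:ℝ) ≤ C := by
    rw [hCdef, le_div_iff₀ h1θ]; nlinarith
  have hC0 : (0:ℝ) < C := by linarith
  have hστ : (0:ℝ) < σ * θ := mul_pos hσ0 hθ0
  have hστ1 : σ * θ ≤ 1 := by nlinarith
  have h8 : 8 * C * (q + 3) / (σ * θ) = 2 * (4 * C * (q + 3) / (σ * θ)) := by ring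
  rw [h8]
  set M : ℝ := 4 * C * (q + 3) / (σ * θ) with hMdef
  have hM156 : (156:ℝ) ≤ M := by
    rw [hMdef, le_div_iff₀ hστ]
    nlinarith [mul_nonneg hC0.le hq]
  have hM0 : (0:ℝ) < M := by linarith
  have hL1 : (1:ℝ) ≤ Real.log M := by
    rw [Real.le_log_iff_exp_le hM0]
    exact Real.exp_one_lt_d9.le.trans (by linarith)
  have hs₀1 : (1:ℝ) ≤ 2 * M * Real.log M := by nlinarith
  set I : ℝ := (2 * M * Real.log M) ^ (2 / θ) with hIdef
  have hI1 : (1:ℝ) ≤ I := by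
    have h := Real.rpow_le_rpow_of_exponent_le hs₀1 (show (0:ℝ) ≤ 2 / θ by positivity)
    rwa [Real.rpow_zero] at h
  have hlogI0 : (0:ℝ) ≤ Real.log I := Real.log_nonneg hI1
  set n : ℝ := ℓ.support.sup' (Finsupp.support_nonempty_iff.mpr hℓ) jap with hndef
  -- pointwise bound
  have hpt : ∀ i ∈ ℓ.support,
      -(σ / C) * |(ℓ i : ℝ)| * jap i ^ (θ / 2) +
        Real.log (1 + |(ℓ i : ℝ)| ^ 2 * jap i ^ (2 + q)) ≤
      -(σ / (2 * C)) * |(ℓ i : ℝ)| * jap i ^ (θ / 2) +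
        (if jap i ≤ I then 2 * (q + 3) * Real.log I else 0) := by
    intro i hi
    have hne0 : ℓ i ≠ 0 := Finsupp.mem_support_iff.mp hi
    have hx1 : (1:ℝ) ≤ |(ℓ i : ℝ)| := by
      have : (1:ℤ) ≤ |ℓ i| := Int.one_le_abs hne0
      calc (1:ℝ) ≤ ((|ℓ i| : ℤ) : ℝ) := by exact_mod_cast this
        _ = |(ℓ i : ℝ)| := by push_cast; ring
    have ht1 : (1:ℝ) ≤ jap i := by unfold jap; exact le_max_right _ _
    have hk := key_ineq θ q σ C hθ0 hθ1 hq hσ0 hC0 |(ℓ i : ℝ)| (jap i) hx1 ht1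
    rw [← hMdef] at hk
    by_cases hcase : jap i ≤ I
    · rw [if_pos hcase]
      have hR := R_le_G θ q σ C hθ0 hθ1 hq hσ0 hσ1 hC13 (jap i) ht1 (by rw [← hIdef] at *; exact hcase)
      rw [← hMdef, ← hIdef] at hR
      linarith
    · rw [if_neg hcase]
      have hR := R_nonpos θ q σ C hθ0 hθ1 hq hσ0 hσ1 hC13 (jap i) ht1
        (by rw [← hMdef, ← hIdef]; linarith)
      rw [← hMdef] at hR
      linarith
  have hsum1 := Finset.sum_le_sum hpt
  have hsplit2 : (∑ i ∈ ℓ.support, (-(σ / (2 * C)) * |(ℓ i : ℝ)| * jap i ^ (θ / 2) +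
        (if jap i ≤ I then 2 * (q + 3) * Real.log I else 0))) =
      (∑ i ∈ ℓ.support, -(σ / (2 * C)) * |(ℓ i : ℝ)| * jap i ^ (θ / 2)) +
      (∑ i ∈ ℓ.support, (if jap i ≤ I then 2 * (q + 3) * Real.log I else 0)) :=
    Finset.sum_add_distrib
  -- bound the negative sum by the max term
  obtain ⟨j, hjmem, hjsup⟩ := Finset.exists_mem_eq_sup' (Finsupp.support_nonempty_iff.mpr hℓ) jap
  have hsumA : (∑ i ∈ ℓ.support, -(σ / (2 * C)) * |(ℓ i : ℝ)| * jap i ^ (θ / 2)) ≤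
      -(σ / (2 * C)) * n ^ (θ / 2) := by
    have hterm : ∀ i ∈ ℓ.support.erase j, -(σ / (2 * C)) * |(ℓ i : ℝ)| * jap i ^ (θ / 2) ≤ 0 := by
      intro i _
      have hjnn : (0:ℝ) ≤ jap i ^ (θ / 2) :=
        Real.rpow_nonneg (le_trans zero_le_one (by unfold jap; exact le_max_right _ _)) _
      have : (0:ℝ) ≤ σ / (2 * C) * |(ℓ i : ℝ)| * jap i ^ (θ / 2) := by
        apply mul_nonneg (mul_nonneg (by positivity) (abs_nonneg _)) hjnn
      linarith
    have hsplit := Finset.add_sum_erase ℓ.support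
      (fun i => -(σ / (2 * C)) * |(ℓ i : ℝ)| * jap i ^ (θ / 2)) hjmem
    have hrest := Finset.sum_nonpos hterm
    have hx1 : (1:ℝ) ≤ |(ℓ j : ℝ)| := by
      have : (1:ℤ) ≤ |ℓ j| := Int.one_le_abs (Finsupp.mem_support_iff.mp hjmem)
      calc (1:ℝ) ≤ ((|ℓ j| : ℤ) : ℝ) := by exact_mod_cast this
        _ = |(ℓ j : ℝ)| := by push_cast; ring
    have hjn : jap j = n := by rw [hndef, hjsup]
    have hτ : (0:ℝ) < jap j ^ (θ / 2) :=
      Real.rpow_pos_of_pos (lt_of_lt_of_le one_pos (by unfold jap; exact le_max_right _ _)) _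
    have hterm_j : -(σ / (2 * C)) * |(ℓ j : ℝ)| * jap j ^ (θ / 2) ≤
        -(σ / (2 * C)) * n ^ (θ / 2) := by
      rw [← hjn]
      nlinarith [mul_nonneg (div_pos hσ0 (by linarith : (0:ℝ) < 2 * C)).le hτ.le,
        mul_nonneg (mul_nonneg (div_pos hσ0 (by linarith : (0:ℝ) < 2 * C)).le
          (by linarith : (0:ℝ) ≤ |(ℓ j : ℝ)| - 1)) hτ.le]
    linarith [hsplit, hrest, hterm_j]
  -- bound the indicator sum
  have hsumB : (∑ i ∈ ℓ.support, (if jap i ≤ I then 2 * (q + 3) * Real.log I else 0)) ≤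
      6 * (q + 3) * I * Real.log I := by
    have hfil : (∑ i ∈ ℓ.support, (if jap i ≤ I then 2 * (q + 3) * Real.log I else 0)) =
        (ℓ.support.filter (fun i => jap i ≤ I)).card * (2 * (q + 3) * Real.log I) := by
      rw [← Finset.sum_filter, Finset.sum_const, nsmul_eq_mul]
    have hsub : ℓ.support.filter (fun i => jap i ≤ I) ⊆ Finset.Icc (-⌊I⌋) ⌊I⌋ := by
      intro i hi
      obtain ⟨-, hiI⟩ := Finset.mem_filter.mp hi
      have habs : |(i:ℝ)| ≤ I := le_trans (by unfold jap at hiI ⊢; exact le_max_left _ _) hiI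
      rw [abs_le] at habs
      rw [Finset.mem_Icc]
      constructor
      · rw [neg_le]
        exact Int.le_floor.mpr (by push_cast; linarith [habs.1])
      · exact Int.le_floor.mpr habs.2
    have hcard : ((ℓ.support.filter (fun i => jap i ≤ I)).card : ℝ) ≤ 3 * I := by
      have h1 : (ℓ.support.filter (fun i => jap i ≤ I)).card ≤ (Finset.Icc (-⌊I⌋) ⌊I⌋).card :=
        Finset.card_le_card hsub
      have hfl0 : (0:ℤ) ≤ ⌊I⌋ := Int.le_floor.mpr (by push_cast; linarith)
      have h2 : (Finset.Icc (-⌊I⌋) ⌊I⌋).card = (⌊I⌋ + 1 - -⌊I⌋).toNat := Int.card_Icc _ _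
      have h3 : ((⌊I⌋ + 1 - -⌊I⌋).toNat : ℝ) = 2 * (⌊I⌋ : ℝ) + 1 := by
        have h : ((⌊I⌋ + 1 - -⌊I⌋).toNat : ℤ) = 2 * ⌊I⌋ + 1 := by omega
        exact_mod_cast h
      have h4 : ((⌊I⌋:ℤ) : ℝ) ≤ I := Int.floor_le I
      have h5 : ((ℓ.support.filter (fun i => jap i ≤ I)).card : ℝ) ≤
          ((Finset.Icc (-⌊I⌋) ⌊I⌋).card : ℝ) := by exact_mod_cast h1
      rw [h2, h3] at h5
      linarith
    rw [hfil]
    have hG : (0:ℝ) ≤ 2 * (q + 3) * Real.log I := by positivity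
    calc ((ℓ.support.filter (fun i => jap i ≤ I)).card : ℝ) * (2 * (q + 3) * Real.log I)
        ≤ 3 * I * (2 * (q + 3) * Real.log I) := mul_le_mul_of_nonneg_right hcard hG
      _ = 6 * (q + 3) * I * Real.log I := by ring
  have hfin : (0:ℝ) ≤ (q + 3) * I * Real.log I := by positivity
  linarith [hsum1, hsplit2, hsumA, hsumB]
end

section
/- Let H be a complex Hilbert space, let r > 0 and K > 0, and let F, G : H → H satisfy Re⟨F(x), x⟩ = 0 for every x ∈ H and ‖G(x)‖ ≤ K for every x with ‖x‖ ≤ r. If v : ℝ → H is differentiable with v'(t) = F(v(t)) + G(v(t)) for all t and ‖v(0)‖ ≤ (3/4)·r, then for every t with |t| ≤ r/(8K) one has | ‖v(t)‖ − ‖v(0)‖ | ≤ r/8; in particular ‖v(t)‖ < r for all such t. -/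
/-!
Since `F` is tangential, `d/dt ‖v‖² = 2 Re⟪G v, v⟫`, so while `v` stays in the closed ball of
radius `r` its norm is `K`-Lipschitz in time. For `0 ≤ t ≤ r/(8K)` the norm therefore moves by at
most `r/8`, from at most `3r/4` to at most `7r/8 < r`, so `v` cannot reach the sphere of radius
`r` before time `r/(8K)`.
Negative times follow by reversing time, which replaces `F` and `G` by `-F` and `-G`.
-/

open Set

theorem forall_lt_of_forall_Ico_lt {α β : Type*} [ConditionallyCompleteLinearOrder α]
    [TopologicalSpace α] [OrderTopology α] [LinearOrder β] [TopologicalSpace β]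
    [OrderClosedTopology β] {f : α → β} {a b : α} {r : β} (hf : ContinuousOn f (Icc a b))
    (h : ∀ s ∈ Icc a b, (∀ u ∈ Ico a s, f u < r) → f s < r) : ∀ s ∈ Icc a b, f s < r := by
  by_contra! hbad
  set B := Icc a b ∩ f ⁻¹' Ici r
  have hB_bdd : BddBelow B := ⟨a, fun s hs => hs.1.1⟩
  obtain ⟨s, hs, hrs⟩ := hbad
  have hmem : sInf B ∈ B :=
    (hf.preimage_isClosed_of_isClosed isClosed_Icc isClosed_Ici).csInf_mem ⟨s, hs, hrs⟩ hB_bdd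
  refine (h _ hmem.1 fun u hu => ?_).not_ge hmem.2
  by_contra! hru
  exact hu.2.not_ge (csInf_le hB_bdd ⟨⟨hu.1, hu.2.le.trans hmem.1.2⟩, hru⟩)

theorem abs_norm_sub_norm_le_of_abs_inner_le {E : Type*} [NormedAddCommGroup E]
    [InnerProductSpace ℝ E] {v v' : ℝ → E} {K a b : ℝ} (hK : 0 ≤ K) (hab : a ≤ b)
    (hv : ∀ s ∈ Icc a b, HasDerivWithinAt v (v' s) (Icc a b) s)
    (hbound : ∀ s ∈ Ico a b, |inner ℝ (v s) (v' s)| ≤ K * ‖v s‖) :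
    |‖v b‖ - ‖v a‖| ≤ K * (b - a) := by
  refine le_of_forall_pos_le_add fun ε hε => ?_
  -- `‖v‖` need not be differentiable where `v` vanishes; its smoothing `g` is.
  set g : ℝ → ℝ := fun s => √(‖v s‖ ^ 2 + ε ^ 2)
  have hg_pos : ∀ s, 0 < g s := fun s => Real.sqrt_pos.2 (by positivity)
  have hg_deriv : ∀ s ∈ Icc a b,
      HasDerivWithinAt g (2 * inner ℝ (v s) (v' s) / (2 * g s)) (Icc a b) s := fun s hs =>
    ((hv s hs).norm_sq.add_const _).sqrt (by positivity)
  have hg_ge : ∀ s, ‖v s‖ ≤ g s := fun s => Real.le_sqrt_of_sq_le (by nlinarith)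
  have hg_le : ∀ s, g s ≤ ‖v s‖ + ε := fun s =>
    Real.sqrt_le_iff.2 ⟨by positivity, by nlinarith [norm_nonneg (v s)]⟩
  have hg_deriv_le : ∀ s ∈ Ico a b, ‖2 * inner ℝ (v s) (v' s) / (2 * g s)‖ ≤ K := by
    intro s hs
    rw [mul_div_mul_left _ _ two_ne_zero, Real.norm_eq_abs, abs_div, abs_of_pos (hg_pos s)]
    exact div_le_of_le_mul₀ (hg_pos s).le hK
      ((hbound s hs).trans (mul_le_mul_of_nonneg_left (hg_ge s) hK))
  have hg_lip := norm_image_sub_le_of_norm_deriv_le_segment' hg_deriv hg_deriv_le b ⟨hab, le_rfl⟩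
  rw [Real.norm_eq_abs, abs_sub_le_iff] at hg_lip
  rw [abs_sub_le_iff]
  constructor <;> linarith [hg_ge a, hg_ge b, hg_le a, hg_le b]

section TangentialField

variable {H : Type*} [NormedAddCommGroup H] [InnerProductSpace ℂ H] {r K : ℝ} {F G : H → H}
  {v : ℝ → H}

theorem abs_norm_sub_norm_le_of_tangential (hK : 0 ≤ K) (hF : ∀ x, (inner ℂ (F x) x).re = 0)
    (hG : ∀ x, ‖x‖ ≤ r → ‖G x‖ ≤ K) (hv : ∀ t, HasDerivAt v (F (v t) + G (v t)) t) {t : ℝ}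
    (ht : 0 ≤ t) (hball : ∀ s ∈ Ico 0 t, ‖v s‖ ≤ r) : |‖v t‖ - ‖v 0‖| ≤ K * t := by
  let _ := InnerProductSpace.rclikeToReal ℂ H
  have hradial : ∀ s ∈ Ico 0 t, |inner ℝ (v s) (F (v s) + G (v s))| ≤ K * ‖v s‖ := by
    intro s hs
    rw [real_inner_comm, inner_add_left, real_inner_eq_re_inner ℂ (F _),
      show RCLike.re (inner ℂ (F (v s)) (v s)) = 0 from hF _, zero_add]
    exact (abs_real_inner_le_norm _ _).trans
      (mul_le_mul_of_nonneg_right (hG _ (hball s hs)) (norm_nonneg _))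
  simpa using abs_norm_sub_norm_le_of_abs_inner_le hK ht
    (fun s _ => (hv s).hasDerivWithinAt) hradial

theorem norm_stability_tangential_field_of_nonneg (hr : 0 < r) (hK : 0 < K)
    (hF : ∀ x, (inner ℂ (F x) x).re = 0) (hG : ∀ x, ‖x‖ ≤ r → ‖G x‖ ≤ K)
    (hv : ∀ t, HasDerivAt v (F (v t) + G (v t)) t) (h0 : ‖v 0‖ ≤ 3 / 4 * r) {t : ℝ}
    (ht : 0 ≤ t) (htr : t ≤ r / (8 * K)) : |‖v t‖ - ‖v 0‖| ≤ r / 8 ∧ ‖v t‖ < r := by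
  have hKs : ∀ s ≤ r / (8 * K), K * s ≤ r / 8 := fun s hs => by
    rw [le_div_iff₀ (by positivity)] at hs
    linarith
  have hlt : ∀ s ∈ Icc 0 (r / (8 * K)), ‖v s‖ < r := by
    refine forall_lt_of_forall_Ico_lt
      (fun s _ => (hv s).continuousAt.norm.continuousWithinAt) fun s hs hbefore => ?_
    have := abs_norm_sub_norm_le_of_tangential hK.le hF hG hv hs.1 fun u hu => (hbefore u hu).le
    linarith [(abs_sub_le_iff.1 this).1, hKs s hs.2]
  exact ⟨(abs_norm_sub_norm_le_of_tangential hK.le hF hG hv ht fun s hs =>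
    (hlt s ⟨hs.1, hs.2.le.trans htr⟩).le).trans (hKs t htr), hlt t ⟨ht, htr⟩⟩

end TangentialField

theorem norm_stability_tangential_field_general
    {H : Type*} [NormedAddCommGroup H] [InnerProductSpace ℂ H]
    (r K : ℝ) (hr : 0 < r) (hK : 0 < K)
    (F G : H → H)
    (hF : ∀ x : H, (inner ℂ (F x) x : ℂ).re = 0)
    (hG : ∀ x : H, ‖x‖ ≤ r → ‖G x‖ ≤ K)
    (v : ℝ → H)
    (hv : ∀ t : ℝ, HasDerivAt v (F (v t) + G (v t)) t)
    (h0 : ‖v 0‖ ≤ 3 / 4 * r) :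
    ∀ t : ℝ, |t| ≤ r / (8 * K) → |‖v t‖ - ‖v 0‖| ≤ r / 8 ∧ ‖v t‖ < r := by
  intro t htr
  rcases le_total 0 t with ht | ht
  · exact norm_stability_tangential_field_of_nonneg hr hK hF hG hv h0 ht
      (by rwa [abs_of_nonneg ht] at htr)
  · have hv_rev : ∀ s, HasDerivAt (fun s => v (-s)) (-F (v (-s)) + -G (v (-s))) s := fun s => by
      simpa [add_comm, Function.comp_def] using (hv (-s)).scomp s (hasDerivAt_neg' s)
    simpa using norm_stability_tangential_field_of_nonneg (F := fun x => -F x)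
      (G := fun x => -G x) hr hK (by simpa [inner_neg_left] using hF) (by simpa using hG) hv_rev
      (by simpa using h0) (neg_nonneg.2 ht) (by rwa [abs_of_nonpos ht] at htr)

/-- (Norm stability under a tangential plus small vector field.) Let `H` be
a complex Hilbert space, `r, K > 0`, and `F, G : H → H` with `Re⟪F x, x⟫ = 0` for every `x`
and `‖G x‖ ≤ K` on the closed ball of radius `r`. If `v : ℝ → H` solves `v' = F ∘ v + G ∘ v`
with `‖v 0‖ ≤ (3/4)r`, then `|‖v t‖ − ‖v 0‖| ≤ r/8` and `‖v t‖ < r` for all `|t| ≤ r/(8K)`. -/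
theorem norm_stability_tangential_field
    {H : Type*} [NormedAddCommGroup H] [InnerProductSpace ℂ H] [CompleteSpace H]
    (r K : ℝ) (hr : 0 < r) (hK : 0 < K)
    (F G : H → H)
    (hF : ∀ x : H, (inner ℂ (F x) x : ℂ).re = 0)
    (hG : ∀ x : H, ‖x‖ ≤ r → ‖G x‖ ≤ K)
    (v : ℝ → H)
    (hv : ∀ t : ℝ, HasDerivAt v (F (v t) + G (v t)) t)
    (h0 : ‖v 0‖ ≤ 3 / 4 * r) :
    ∀ t : ℝ, |t| ≤ r / (8 * K) → |‖v t‖ - ‖v 0‖| ≤ r / 8 ∧ ‖v t‖ < r :=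
  norm_stability_tangential_field_general r K hr hK F G hF hG v hv h0
end
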